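/- Let $m$ be a positive integer, $K^* \in \mathbb{R}^{m\times m}$ an arbitrary matrix, $O \in \mathbb{R}^{m\times m}$ orthogonal, $L \in \mathbb{R}^{m\times m}$ real diagonal, and $K_U \in \mathbb{R}^{m\times m}$ diagonal with nonnegative diagonal entries. Define $X := O^\top \exp(L) O$, $B_1 := \exp(L) - O K^* O^\top$, $B_2 := X K^{*\top} - K^{*\top} X$, and $U := -K_U \exp(-L)\,\mathrm{diag}(B_1)$. Let $\mathcal{K} : \mathbb{R}^{m\times m} \to \mathbb{R}^{m\times m}$ be a linear map that maps skew-symmetric matrices to skew-symmetric matrices and is positive semidefinite with respect to the Frobenius inner product (i.e., $\mathrm{tr}(A^\top \mathcal{K}(A)) \ge 0$ for all $A$), and set $\Omega := \mathcal{K}\big((B_2 - B_2^\top)/2\big)$. Then $\mathrm{tr}\big((K^* - X)^\top (X\Omega - \Omega X + O^\top \exp(L)\, U\, O)\big) \ge 0$. -/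

import Mathlib

/-!
Write `P = K* - X`. The Lyapunov derivative splits into a rotational and a diagonal part.
Since `X` is symmetric, `tr (Pᵀ (X Ω - Ω X)) = tr ((Pᵀ X - X Pᵀ) Ω) = -tr (B₂ Ω)`, and because `Ω`
is skew-symmetric only the skew part `A` of `B₂` contributes, giving `tr (Aᵀ 𝒦 A) ≥ 0`.
Since `exp L` commutes with the diagonal gain `K_U`, `exp L · U = -K_U diag B₁`, and conjugating
by `O` turns `P` into `-B₁`, so the second part is `∑ᵢ (K_U)ᵢᵢ (B₁)ᵢᵢ² ≥ 0`.
-/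

open Matrix NormedSpace

namespace Matrix

variable {n k R 𝔸 : Type*}

theorem transpose_smul_sub_transpose [CommRing R] (c : R) (B : Matrix n n R) :
    (c • (B - Bᵀ))ᵀ = -(c • (B - Bᵀ)) := by
  rw [transpose_smul, transpose_sub, transpose_transpose, ← smul_neg, neg_sub]

variable [Fintype n]

section CommRing

variable [CommRing R]

theorem trace_mul_commutator (M X Ω : Matrix n n R) :
    (M * (X * Ω - Ω * X)).trace = ((M * X - X * M) * Ω).trace := by
  rw [mul_sub, sub_mul, trace_sub, trace_sub, Matrix.mul_assoc, ← Matrix.mul_assoc M Ω,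
    trace_mul_comm (M * Ω), Matrix.mul_assoc]

theorem trace_transpose_mul_conj [Fintype k] (P : Matrix n n R) (O : Matrix k n R)
    (M : Matrix k k R) : (Pᵀ * (Oᵀ * M * O)).trace = ((O * P * Oᵀ)ᵀ * M).trace := by
  rw [transpose_mul, transpose_mul, transpose_transpose, ← Matrix.mul_assoc, trace_mul_comm]
  simp only [Matrix.mul_assoc]

theorem trace_transpose_mul_of_transpose_eq_neg {Ω : Matrix n n R} (hΩ : Ωᵀ = -Ω)
    (B : Matrix n n R) : (Bᵀ * Ω).trace = -(B * Ω).trace := by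
  rw [← trace_transpose, transpose_mul, transpose_transpose, hΩ, neg_mul, trace_neg,
    trace_mul_comm]

end CommRing

theorem trace_skewPart_transpose_mul [Field R] [CharZero R] {Ω : Matrix n n R}
    (hΩ : Ωᵀ = -Ω) (B : Matrix n n R) :
    (((1 / 2 : R) • (B - Bᵀ))ᵀ * Ω).trace = -(B * Ω).trace := by
  rw [transpose_smul_sub_transpose, neg_mul, trace_neg, smul_mul, trace_smul, sub_mul,
    trace_sub, trace_transpose_mul_of_transpose_eq_neg hΩ, smul_eq_mul]
  ring

variable [DecidableEq n]

theorem IsDiag.commute [CommSemiring R] {A B : Matrix n n R} (hA : A.IsDiag) (hB : B.IsDiag) :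
    Commute A B := by
  rw [← hA.diagonal_diag, ← hB.diagonal_diag, Commute, SemiconjBy, diagonal_mul_diagonal,
    diagonal_mul_diagonal]
  simp only [mul_comm]

theorem IsDiag.exp [CommRing 𝔸] [TopologicalSpace 𝔸] [IsTopologicalRing 𝔸] [T2Space 𝔸]
    [Algebra ℚ 𝔸] {L : Matrix n n 𝔸} (hL : L.IsDiag) : (exp L).IsDiag := by
  rw [← hL.diagonal_diag, exp_diagonal]
  exact isDiag_diagonal _

theorem exp_mul_exp_neg [NormedRing 𝔸] [NormedAlgebra ℚ 𝔸] [CompleteSpace 𝔸]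
    (A : Matrix n n 𝔸) : exp A * exp (-A) = 1 := by
  rw [← exp_add_of_commute _ _ (Commute.refl A).neg_right, add_neg_cancel, exp_zero]

theorem trace_transpose_mul_mul_diagonal_diag_nonneg [CommRing R] [LinearOrder R]
    [IsStrictOrderedRing R] {D : Matrix n n R} (hD : D.IsDiag) (hD_nonneg : ∀ i, 0 ≤ D i i)
    (B : Matrix n n R) : 0 ≤ (Bᵀ * (D * diagonal B.diag)).trace := by
  rw [← hD.diagonal_diag, diagonal_mul_diagonal, trace]
  refine Finset.sum_nonneg fun i _ => ?_
  simpa only [diag_apply, mul_diagonal, transpose_apply, mul_left_comm (B i i)] using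
    mul_nonneg (hD_nonneg i) (mul_self_nonneg (B i i))

end Matrix

theorem stmt_12_general (m : ℕ)
    (Kstar : Matrix (Fin m) (Fin m) ℝ)
    (O : Matrix (Fin m) (Fin m) ℝ) (hO : O * Oᵀ = 1)
    (L : Matrix (Fin m) (Fin m) ℝ) (hL : L.IsDiag)
    (KU : Matrix (Fin m) (Fin m) ℝ) (hKU : KU.IsDiag) (hKUpos : ∀ i, 0 ≤ KU i i)
    (X : Matrix (Fin m) (Fin m) ℝ) (hX : X = Oᵀ * NormedSpace.exp L * O)
    (B1 : Matrix (Fin m) (Fin m) ℝ) (hB1 : B1 = NormedSpace.exp L - O * Kstar * Oᵀ)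
    (B2 : Matrix (Fin m) (Fin m) ℝ) (hB2 : B2 = X * Kstarᵀ - Kstarᵀ * X)
    (U : Matrix (Fin m) (Fin m) ℝ)
    (hU : U = -(KU * NormedSpace.exp (-L) * Matrix.diagonal B1.diag))
    (𝒦 : Matrix (Fin m) (Fin m) ℝ →ₗ[ℝ] Matrix (Fin m) (Fin m) ℝ)
    (h𝒦skew : ∀ A : Matrix (Fin m) (Fin m) ℝ, Aᵀ = -A → (𝒦 A)ᵀ = -(𝒦 A))
    (h𝒦psd : ∀ A : Matrix (Fin m) (Fin m) ℝ, 0 ≤ (Aᵀ * 𝒦 A).trace)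
    (Ω : Matrix (Fin m) (Fin m) ℝ) (hΩ : Ω = 𝒦 ((1 / 2 : ℝ) • (B2 - B2ᵀ))) :
    0 ≤ ((Kstar - X)ᵀ * (X * Ω - Ω * X + Oᵀ * NormedSpace.exp L * U * O)).trace := by
  have hE_symm : (exp L)ᵀ = exp L := hL.isSymm.exp
  have hX_symm : Xᵀ = X := by
    rw [hX, transpose_mul, transpose_mul, transpose_transpose, hE_symm, Matrix.mul_assoc]
  have hΩ_skew : Ωᵀ = -Ω := hΩ ▸ h𝒦skew _ (transpose_smul_sub_transpose _ _)
  have hcommutator : (Kstar - X)ᵀ * X - X * (Kstar - X)ᵀ = -B2 := by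
    rw [transpose_sub, hX_symm, hB2]
    noncomm_ring
  have hconj : O * (Kstar - X) * Oᵀ = -B1 := by
    have hOXO : O * X * Oᵀ = exp L := by
      rw [hX, ← Matrix.mul_assoc, ← Matrix.mul_assoc, hO, Matrix.one_mul, Matrix.mul_assoc, hO,
        Matrix.mul_one]
    rw [mul_sub, sub_mul, hOXO, hB1, neg_sub]
  have hEU : exp L * U = -(KU * diagonal B1.diag) := by
    rw [hU, mul_neg, ← Matrix.mul_assoc, ← Matrix.mul_assoc, (hL.exp.commute hKU).eq,
      Matrix.mul_assoc KU, exp_mul_exp_neg, Matrix.mul_one]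
  rw [mul_add, trace_add, trace_mul_commutator, hcommutator, Matrix.mul_assoc Oᵀ,
    trace_transpose_mul_conj, hconj, hEU, transpose_neg, neg_mul_neg]
  refine add_nonneg ?_ (trace_transpose_mul_mul_diagonal_diag_nonneg hKU hKUpos B1)
  rw [neg_mul, trace_neg, ← trace_skewPart_transpose_mul hΩ_skew, hΩ]
  exact h𝒦psd _

/-- the dissipation inequality at the heart of Lemma 3. -/
theorem stmt_12 (m : ℕ) (hm : 0 < m)
    (Kstar : Matrix (Fin m) (Fin m) ℝ)
    (O : Matrix (Fin m) (Fin m) ℝ) (hO : O * Oᵀ = 1)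
    (L : Matrix (Fin m) (Fin m) ℝ) (hL : L.IsDiag)
    (KU : Matrix (Fin m) (Fin m) ℝ) (hKU : KU.IsDiag) (hKUpos : ∀ i, 0 ≤ KU i i)
    (X : Matrix (Fin m) (Fin m) ℝ) (hX : X = Oᵀ * NormedSpace.exp L * O)
    (B1 : Matrix (Fin m) (Fin m) ℝ) (hB1 : B1 = NormedSpace.exp L - O * Kstar * Oᵀ)
    (B2 : Matrix (Fin m) (Fin m) ℝ) (hB2 : B2 = X * Kstarᵀ - Kstarᵀ * X)
    (U : Matrix (Fin m) (Fin m) ℝ)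
    (hU : U = -(KU * NormedSpace.exp (-L) * Matrix.diagonal B1.diag))
    (𝒦 : Matrix (Fin m) (Fin m) ℝ →ₗ[ℝ] Matrix (Fin m) (Fin m) ℝ)
    (h𝒦skew : ∀ A : Matrix (Fin m) (Fin m) ℝ, Aᵀ = -A → (𝒦 A)ᵀ = -(𝒦 A))
    (h𝒦psd : ∀ A : Matrix (Fin m) (Fin m) ℝ, 0 ≤ (Aᵀ * 𝒦 A).trace)
    (Ω : Matrix (Fin m) (Fin m) ℝ) (hΩ : Ω = 𝒦 ((1 / 2 : ℝ) • (B2 - B2ᵀ))) :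
    0 ≤ ((Kstar - X)ᵀ * (X * Ω - Ω * X + Oᵀ * NormedSpace.exp L * U * O)).trace :=
  stmt_12_general m Kstar O hO L hL KU hKU hKUpos X hX B1 hB1 B2 hB2 U hU 𝒦 h𝒦skew h𝒦psd Ω hΩ
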